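/- Let U be a Hopf algebra over a field k with comultiplication Δ, counit ε, and bijective antipode S, and let B, B' ⊆ U be right coideal subalgebras. Let φ : U → k be a zonal spherical function for (B, B'). Then φ ∘ S is a zonal spherical function for (S⁻²(B'), B); explicitly, for all b ∈ B, b' ∈ B', and x ∈ U one has φ(S(S⁻²(b') · x · b)) = ε(b') · φ(S(x)) · ε(b). -/

import Mathlib

open TensorProduct

/-- `B` is a right coideal subalgebra of the Hopf algebra `U`: `Δ(B) ⊆ B ⊗ U`. -/
def IsRightCoidealSubalgebra (k : Type*) {U : Type*} [CommSemiring k] [Semiring U]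
    [Bialgebra k U] (B : Subalgebra k U) : Prop :=
  ∀ b ∈ B, Coalgebra.comul (R := k) b ∈
    LinearMap.range (LinearMap.rTensor U B.toSubmodule.subtype)

/-- `f : U → k` is a zonal spherical function for `(B, B')`. -/
def IsZonalSpherical (k : Type*) {U : Type*} [CommSemiring k] [Semiring U]
    [Bialgebra k U] (B B' : Subalgebra k U) (f : U →ₗ[k] k) : Prop :=
  ∀ (b : B) (x : U) (b' : B'),
    f ((b : U) * x * (b' : U)) =
      Coalgebra.counit (R := k) (b : U) * f x * Coalgebra.counit (R := k) (b' : U)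


open TensorProduct

noncomputable section ZSAux

open LinearMap TensorProduct

namespace ZSAux

variable {k : Type*} [CommSemiring k]

section Conv

variable {C : Type*} [AddCommMonoid C] [Module k C]
  {A : Type*} [Semiring A] [Algebra k A]

/-- Convolution product of linear maps relative to a "comultiplication" `δ`. -/
def conv (δ : C →ₗ[k] C ⊗[k] C) (f g : C →ₗ[k] A) : C →ₗ[k] A :=
  LinearMap.mul' k A ∘ₗ TensorProduct.map f g ∘ₗ δ

lemma conv_apply (δ : C →ₗ[k] C ⊗[k] C) (f g : C →ₗ[k] A) (x : C) :
    conv δ f g x = LinearMap.mul' k A (TensorProduct.map f g (δ x)) := rfl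

lemma conv_assoc (δ : C →ₗ[k] C ⊗[k] C)
    (hδ : (TensorProduct.assoc k C C C).toLinearMap ∘ₗ δ.rTensor C ∘ₗ δ = δ.lTensor C ∘ₗ δ)
    (f g h : C →ₗ[k] A) :
    conv δ (conv δ f g) h = conv δ f (conv δ g h) := by
  have key : ∀ v : (A ⊗[k] A) ⊗[k] A,
      LinearMap.mul' k A ((LinearMap.mul' k A).rTensor A v) =
        LinearMap.mul' k A ((LinearMap.mul' k A).lTensor A ((TensorProduct.assoc k A A A) v)) := by
    intro v
    induction v using TensorProduct.induction_on with
    | zero => simp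
    | add u v hu hv => simp [map_add, hu, hv]
    | tmul u z =>
      induction u using TensorProduct.induction_on with
      | zero => simp
      | add p q hp hq => simp only [add_tmul, map_add, hp, hq]
      | tmul x y => simp [mul_assoc]
  have e1 : ∀ w : C ⊗[k] C, TensorProduct.map (conv δ f g) h w =
      (LinearMap.mul' k A).rTensor A
        (TensorProduct.map (TensorProduct.map f g) h (δ.rTensor C w)) := by
    intro w
    induction w using TensorProduct.induction_on with
    | zero => simp
    | add u v hu hv => simp [map_add, hu, hv]
    | tmul c d => simp [conv_apply]
  have e2 : ∀ w : C ⊗[k] C, TensorProduct.map f (conv δ g h) w =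
      (LinearMap.mul' k A).lTensor A
        (TensorProduct.map f (TensorProduct.map g h) (δ.lTensor C w)) := by
    intro w
    induction w using TensorProduct.induction_on with
    | zero => simp
    | add u v hu hv => simp [map_add, hu, hv]
    | tmul c d => simp [conv_apply]
  ext x
  have hx : δ.lTensor C (δ x) = (TensorProduct.assoc k C C C) (δ.rTensor C (δ x)) :=
    (LinearMap.congr_fun hδ x).symm
  rw [conv_apply, conv_apply, e1, e2, hx, map_map_assoc]
  exact key _

lemma one_conv (δ : C →ₗ[k] C ⊗[k] C) (e : C →ₗ[k] k)
    (he : ∀ x : C, e.rTensor C (δ x) = (1 : k) ⊗ₜ[k] x) (f : C →ₗ[k] A) :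
    conv δ (Algebra.linearMap k A ∘ₗ e) f = f := by
  ext x
  have e1 : TensorProduct.map (Algebra.linearMap k A ∘ₗ e) f (δ x) =
      TensorProduct.map (Algebra.linearMap k A) f (e.rTensor C (δ x)) := by
    generalize δ x = w
    induction w using TensorProduct.induction_on with
    | zero => simp
    | add u v hu hv => simp only [map_add, hu, hv]
    | tmul c d => simp
  rw [conv_apply, e1, he x]
  simp

lemma conv_one (δ : C →ₗ[k] C ⊗[k] C) (e : C →ₗ[k] k)
    (he : ∀ x : C, e.lTensor C (δ x) = x ⊗ₜ[k] (1 : k)) (f : C →ₗ[k] A) :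
    conv δ f (Algebra.linearMap k A ∘ₗ e) = f := by
  ext x
  have e1 : TensorProduct.map f (Algebra.linearMap k A ∘ₗ e) (δ x) =
      TensorProduct.map f (Algebra.linearMap k A) (e.lTensor C (δ x)) := by
    generalize δ x = w
    induction w using TensorProduct.induction_on with
    | zero => simp
    | add u v hu hv => simp only [map_add, hu, hv]
    | tmul c d => simp
  rw [conv_apply, e1, he x]
  simp

lemma conv_inv_unique (δ : C →ₗ[k] C ⊗[k] C) (e : C →ₗ[k] k)
    (hδ : (TensorProduct.assoc k C C C).toLinearMap ∘ₗ δ.rTensor C ∘ₗ δ = δ.lTensor C ∘ₗ δ)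
    (he : ∀ x : C, e.rTensor C (δ x) = (1 : k) ⊗ₜ[k] x)
    (hle : ∀ x : C, e.lTensor C (δ x) = x ⊗ₜ[k] (1 : k))
    {mm f g : C →ₗ[k] A}
    (hf : conv δ mm f = Algebra.linearMap k A ∘ₗ e)
    (hg : conv δ g mm = Algebra.linearMap k A ∘ₗ e) : f = g :=
  calc f = conv δ (Algebra.linearMap k A ∘ₗ e) f := (one_conv δ e he f).symm
  _ = conv δ (conv δ g mm) f := by rw [hg]
  _ = conv δ g (conv δ mm f) := conv_assoc δ hδ _ _ _
  _ = conv δ g (Algebra.linearMap k A ∘ₗ e) := by rw [hf]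
  _ = g := conv_one δ e hle g

end Conv

end ZSAux
set_option maxHeartbeats 1000000
set_option synthInstance.maxHeartbeats 400000
open TensorProduct LinearMap

noncomputable section
namespace ZSAux2

variable {k : Type*} [CommSemiring k] {A : Type*} [Semiring A] [HopfAlgebra k A]

local notation "Δ" => (Coalgebra.comul (R := k) (A := A))
local notation "ε" => (Coalgebra.counit (R := k) (A := A))
local notation "𝒮" => (HopfAlgebra.antipode (R := k) (A := A))

/-- Comultiplication on `A ⊗ A`. -/
def δ₂ : A ⊗[k] A →ₗ[k] (A ⊗[k] A) ⊗[k] (A ⊗[k] A) :=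
  (TensorProduct.tensorTensorTensorComm k A A A A).toLinearMap ∘ₗ
    TensorProduct.map Coalgebra.comul Coalgebra.comul

/-- Counit on `A ⊗ A`. -/
def e₂ : A ⊗[k] A →ₗ[k] k :=
  LinearMap.mul' k k ∘ₗ TensorProduct.map Coalgebra.counit Coalgebra.counit

lemma δ₂_tmul (a b : A) :
    (δ₂ (a ⊗ₜ[k] b) : (A ⊗[k] A) ⊗[k] (A ⊗[k] A)) =
      (TensorProduct.tensorTensorTensorComm k A A A A) (Δ a ⊗ₜ[k] Δ b) := rfl

lemma e₂_tmul (a b : A) : (e₂ (a ⊗ₜ[k] b) : k) = ε a * ε b := rfl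

lemma he2r : ∀ z : A ⊗[k] A, e₂.rTensor (A ⊗[k] A) (δ₂ z) = (1 : k) ⊗ₜ[k] z := by
  have aux : ∀ x y : A ⊗[k] A,
      e₂.rTensor (A ⊗[k] A) ((TensorProduct.tensorTensorTensorComm k A A A A) (x ⊗ₜ[k] y)) =
        TensorProduct.map (LinearMap.mul' k k) LinearMap.id
          ((TensorProduct.tensorTensorTensorComm k k A k A)
            ((Coalgebra.counit.rTensor A x) ⊗ₜ[k] (Coalgebra.counit.rTensor A y))) := by
    intro x y
    induction x using TensorProduct.induction_on with
    | zero => simp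
    | add u v hu hv => simp only [add_tmul, map_add, hu, hv]
    | tmul c d =>
      induction y using TensorProduct.induction_on with
      | zero => simp
      | add u v hu hv => simp only [tmul_add, map_add, hu, hv]
      | tmul p q => simp [e₂]
  intro z
  induction z using TensorProduct.induction_on with
  | zero => simp
  | add u v hu hv => simp only [map_add, hu, hv, tmul_add]
  | tmul a b =>
    rw [δ₂_tmul, aux, Coalgebra.rTensor_counit_comul, Coalgebra.rTensor_counit_comul]
    simp

lemma he2l : ∀ z : A ⊗[k] A, e₂.lTensor (A ⊗[k] A) (δ₂ z) = z ⊗ₜ[k] (1 : k) := by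
  have aux : ∀ x y : A ⊗[k] A,
      e₂.lTensor (A ⊗[k] A) ((TensorProduct.tensorTensorTensorComm k A A A A) (x ⊗ₜ[k] y)) =
        TensorProduct.map LinearMap.id (LinearMap.mul' k k)
          ((TensorProduct.tensorTensorTensorComm k A k A k)
            ((Coalgebra.counit.lTensor A x) ⊗ₜ[k] (Coalgebra.counit.lTensor A y))) := by
    intro x y
    induction x using TensorProduct.induction_on with
    | zero => simp
    | add u v hu hv => simp only [add_tmul, map_add, hu, hv]
    | tmul c d =>
      induction y using TensorProduct.induction_on with
      | zero => simp
      | add u v hu hv => simp only [tmul_add, map_add, hu, hv]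
      | tmul p q => simp [e₂]
  intro z
  induction z using TensorProduct.induction_on with
  | zero => simp
  | add u v hu hv => simp only [map_add, hu, hv, add_tmul]
  | tmul a b =>
    rw [δ₂_tmul, aux, Coalgebra.lTensor_counit_comul, Coalgebra.lTensor_counit_comul]
    simp

lemma hδ₂ :
    (TensorProduct.assoc k (A ⊗[k] A) (A ⊗[k] A) (A ⊗[k] A)).toLinearMap ∘ₗ
      δ₂.rTensor (A ⊗[k] A) ∘ₗ δ₂ = δ₂.lTensor (A ⊗[k] A) ∘ₗ (δ₂ (k := k) (A := A)) := by
  have auxr : ∀ x y : A ⊗[k] A,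
      δ₂.rTensor (A ⊗[k] A) ((TensorProduct.tensorTensorTensorComm k A A A A) (x ⊗ₜ[k] y)) =
        TensorProduct.map (TensorProduct.tensorTensorTensorComm k A A A A).toLinearMap
          LinearMap.id
          ((TensorProduct.tensorTensorTensorComm k (A ⊗[k] A) A (A ⊗[k] A) A)
            ((Coalgebra.comul.rTensor A x) ⊗ₜ[k] (Coalgebra.comul.rTensor A y))) := by
    intro x y
    induction x using TensorProduct.induction_on with
    | zero => simp
    | add u v hu hv => simp only [add_tmul, map_add, hu, hv]
    | tmul c d =>
      induction y using TensorProduct.induction_on with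
      | zero => simp
      | add u v hu hv => simp only [tmul_add, map_add, hu, hv]
      | tmul p q => simp [δ₂_tmul]
  have auxl : ∀ x y : A ⊗[k] A,
      δ₂.lTensor (A ⊗[k] A) ((TensorProduct.tensorTensorTensorComm k A A A A) (x ⊗ₜ[k] y)) =
        TensorProduct.map LinearMap.id
          (TensorProduct.tensorTensorTensorComm k A A A A).toLinearMap
          ((TensorProduct.tensorTensorTensorComm k A (A ⊗[k] A) A (A ⊗[k] A))
            ((Coalgebra.comul.lTensor A x) ⊗ₜ[k] (Coalgebra.comul.lTensor A y))) := by
    intro x y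
    induction x using TensorProduct.induction_on with
    | zero => simp
    | add u v hu hv => simp only [add_tmul, map_add, hu, hv]
    | tmul c d =>
      induction y using TensorProduct.induction_on with
      | zero => simp
      | add u v hu hv => simp only [tmul_add, map_add, hu, hv]
      | tmul p q => simp [δ₂_tmul]
  have sh : ∀ u v : A ⊗[k] (A ⊗[k] A),
      (TensorProduct.assoc k (A ⊗[k] A) (A ⊗[k] A) (A ⊗[k] A))
        (TensorProduct.map (TensorProduct.tensorTensorTensorComm k A A A A).toLinearMap
          LinearMap.id
          ((TensorProduct.tensorTensorTensorComm k (A ⊗[k] A) A (A ⊗[k] A) A)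
            (((TensorProduct.assoc k A A A).symm u) ⊗ₜ[k]
              ((TensorProduct.assoc k A A A).symm v)))) =
      TensorProduct.map LinearMap.id
          (TensorProduct.tensorTensorTensorComm k A A A A).toLinearMap
          ((TensorProduct.tensorTensorTensorComm k A (A ⊗[k] A) A (A ⊗[k] A))
            (u ⊗ₜ[k] v)) := by
    intro u v
    induction u using TensorProduct.induction_on with
    | zero => simp
    | add u₁ u₂ h₁ h₂ => simp only [map_add, add_tmul, h₁, h₂]
    | tmul x₁ w =>
      induction w using TensorProduct.induction_on with
      | zero => simp
      | add w₁ w₂ h₁ h₂ => simp only [map_add, tmul_add, add_tmul, h₁, h₂]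
      | tmul x₂ x₃ =>
        induction v using TensorProduct.induction_on with
        | zero => simp
        | add v₁ v₂ h₁ h₂ => simp only [map_add, tmul_add, h₁, h₂]
        | tmul y₁ w' =>
          induction w' using TensorProduct.induction_on with
          | zero => simp
          | add w₁ w₂ h₁ h₂ => simp only [map_add, tmul_add, h₁, h₂]
          | tmul y₂ y₃ => simp
  apply TensorProduct.ext'
  intro a b
  simp only [LinearMap.comp_apply]
  rw [δ₂_tmul, auxr, auxl, ← Coalgebra.coassoc_symm_apply, ← Coalgebra.coassoc_symm_apply]
  exact sh _ _


lemma h4 : ∀ a b : A,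
    LinearMap.mul' k A (TensorProduct.map (𝒮 ∘ₗ LinearMap.mul' k A) (LinearMap.mul' k A)
      (δ₂ (a ⊗ₜ[k] b))) = algebraMap k A (ε a * ε b) := by
  have aux : ∀ x y : A ⊗[k] A,
      LinearMap.mul' k A (TensorProduct.map (𝒮 ∘ₗ LinearMap.mul' k A) (LinearMap.mul' k A)
        ((TensorProduct.tensorTensorTensorComm k A A A A) (x ⊗ₜ[k] y))) =
      LinearMap.mul' k A ((HopfAlgebra.antipode (R := k)).rTensor A (x * y)) := by
    intro x y
    induction x using TensorProduct.induction_on with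
    | zero => simp
    | add u v hu hv => simp only [add_tmul, map_add, add_mul, hu, hv]
    | tmul c d =>
      induction y using TensorProduct.induction_on with
      | zero => simp
      | add u v hu hv => simp only [tmul_add, map_add, mul_add, hu, hv]
      | tmul p q => simp [Algebra.TensorProduct.tmul_mul_tmul]
  intro a b
  rw [δ₂_tmul, aux, ← Bialgebra.comul_mul,
    HopfAlgebra.mul_antipode_rTensor_comul_apply, Bialgebra.counit_mul]

lemma h5 : ∀ a b : A,
    LinearMap.mul' k A (TensorProduct.map (LinearMap.mul' k A)
      (LinearMap.mul' k A ∘ₗ TensorProduct.map 𝒮 𝒮 ∘ₗ (TensorProduct.comm k A A).toLinearMap)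
      (δ₂ (a ⊗ₜ[k] b))) = algebraMap k A (ε a * ε b) := by
  -- G ((c ⊗ d) ⊗ z) = c * (z * S d)
  set G : (A ⊗[k] A) ⊗[k] A →ₗ[k] A :=
    LinearMap.mul' k A ∘ₗ
      TensorProduct.map LinearMap.id
        (LinearMap.mul' k A ∘ₗ TensorProduct.map LinearMap.id (HopfAlgebra.antipode (R := k)) ∘ₗ
          (TensorProduct.comm k A A).toLinearMap) ∘ₗ
      (TensorProduct.assoc k A A A).toLinearMap with hG
  have hGtmul : ∀ (c d z : A), G ((c ⊗ₜ[k] d) ⊗ₜ[k] z) = c * (z * 𝒮 d) := by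
    intro c d z; simp [hG]
  have aux : ∀ x y : A ⊗[k] A,
      LinearMap.mul' k A (TensorProduct.map (LinearMap.mul' k A)
        (LinearMap.mul' k A ∘ₗ TensorProduct.map 𝒮 𝒮 ∘ₗ (TensorProduct.comm k A A).toLinearMap)
        ((TensorProduct.tensorTensorTensorComm k A A A A) (x ⊗ₜ[k] y))) =
      G (x ⊗ₜ[k] (LinearMap.mul' k A ((HopfAlgebra.antipode (R := k)).lTensor A y))) := by
    intro x y
    induction x using TensorProduct.induction_on with
    | zero => simp
    | add u v hu hv => simp only [add_tmul, map_add, hu, hv]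
    | tmul c d =>
      induction y using TensorProduct.induction_on with
      | zero => simp
      | add u v hu hv => simp only [tmul_add, map_add, hu, hv]
      | tmul p q =>
        rw [hGtmul]
        simp [mul_assoc]
  have step2 : ∀ (r : k) (x : A ⊗[k] A),
      G (x ⊗ₜ[k] algebraMap k A r) =
        r • LinearMap.mul' k A ((HopfAlgebra.antipode (R := k)).lTensor A x) := by
    intro r x
    induction x using TensorProduct.induction_on with
    | zero => simp
    | add u v hu hv => simp only [add_tmul, map_add, hu, hv, smul_add]
    | tmul c d =>
      rw [hGtmul]
      simp [Algebra.smul_def, Algebra.commutes, mul_assoc]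
  intro a b
  rw [δ₂_tmul, aux, HopfAlgebra.mul_antipode_lTensor_comul_apply, step2,
    HopfAlgebra.mul_antipode_lTensor_comul_apply, Algebra.smul_def, ← map_mul, mul_comm]

lemma antipode_one_aux : 𝒮 (1 : A) = 1 := by
  have h := HopfAlgebra.mul_antipode_rTensor_comul_apply (R := k) (A := A) (1 : A)
  simpa [Bialgebra.comul_one, Algebra.TensorProduct.one_def] using h

lemma antipode_mul_antidistrib (a b : A) : 𝒮 (a * b) = 𝒮 b * 𝒮 a := by
  have key :
      (LinearMap.mul' k A ∘ₗ TensorProduct.map 𝒮 𝒮 ∘ₗ (TensorProduct.comm k A A).toLinearMap)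
        = (𝒮 ∘ₗ LinearMap.mul' k A) := by
    refine ZSAux.conv_inv_unique δ₂ e₂ hδ₂ he2r he2l
      (mm := LinearMap.mul' k A) ?_ ?_
    · apply TensorProduct.ext'
      intro a b
      rw [ZSAux.conv_apply]
      rw [h5 a b]
      rfl
    · apply TensorProduct.ext'
      intro a b
      rw [ZSAux.conv_apply]
      rw [h4 a b]
      rfl
  have := LinearMap.congr_fun key (a ⊗ₜ[k] b)
  simpa using this.symm

end ZSAux2
noncomputable section ZSAux3

open TensorProduct LinearMap

variable {k U : Type*} [CommSemiring k] [Semiring U] [HopfAlgebra k U]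

lemma phi_left (B B' : Subalgebra k U) (hB : IsRightCoidealSubalgebra k B)
    (φ : U →ₗ[k] k) (hφ : IsZonalSpherical k B B' φ)
    (b : U) (hb : b ∈ B) (y : U) :
    φ (HopfAlgebra.antipode (R := k) b * y) = Coalgebra.counit (R := k) b * φ y := by
  obtain ⟨t, ht⟩ := hB b hb
  have main : ∀ t : B.toSubmodule ⊗[k] U,
      φ (HopfAlgebra.antipode (R := k)
          ((TensorProduct.lid k U)
            ((Coalgebra.counit (R := k) (A := U)).rTensor U
              (LinearMap.rTensor U B.toSubmodule.subtype t))) * y)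
        = φ (LinearMap.mul' k U
            ((HopfAlgebra.antipode (R := k)).lTensor U
              (LinearMap.rTensor U B.toSubmodule.subtype t)) * y) := by
    intro t
    induction t using TensorProduct.induction_on with
    | zero => simp
    | add u v hu hv => simp only [map_add, add_mul, hu, hv]
    | tmul c u =>
      have hz := hφ ⟨(c : U), c.2⟩ (HopfAlgebra.antipode (R := k) u * y) (1 : B')
      rw [OneMemClass.coe_one, mul_one, Bialgebra.counit_one, mul_one] at hz
      simp only [LinearMap.rTensor_tmul, LinearMap.lTensor_tmul, TensorProduct.lid_tmul,
        Submodule.coe_subtype, map_smul, smul_mul_assoc, LinearMap.mul'_apply]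
      rw [mul_assoc, hz, smul_eq_mul]
  have h1 := main t
  rw [ht, Coalgebra.rTensor_counit_comul, HopfAlgebra.mul_antipode_lTensor_comul_apply] at h1
  simpa [← Algebra.smul_def, smul_eq_mul] using h1

variable (Sinv : U →ₗ[k] U)
  (hS1 : ∀ x : U, Sinv (HopfAlgebra.antipode (R := k) x) = x)
  (hS2 : ∀ x : U, HopfAlgebra.antipode (R := k) (Sinv x) = x)

include hS1 in
lemma Sinv_one : Sinv 1 = 1 := by
  have := hS1 (1 : U)
  rwa [ZSAux2.antipode_one_aux] at this

include hS1 hS2 in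
lemma Sinv_mul (a b : U) : Sinv (a * b) = Sinv b * Sinv a := by
  have h : a * b = HopfAlgebra.antipode (R := k) (Sinv b * Sinv a) := by
    rw [ZSAux2.antipode_mul_antidistrib, hS2, hS2]
  rw [h, hS1]

include hS1 hS2 in
lemma sinv_identity (a : U) :
    LinearMap.mul' k U ((TensorProduct.comm k U U)
        (Sinv.lTensor U (Coalgebra.comul (R := k) a)))
      = algebraMap k U (Coalgebra.counit (R := k) a) := by
  have main : ∀ t : U ⊗[k] U,
      Sinv (LinearMap.mul' k U ((HopfAlgebra.antipode (R := k)).rTensor U t)) =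
        LinearMap.mul' k U ((TensorProduct.comm k U U) (Sinv.lTensor U t)) := by
    intro t
    induction t using TensorProduct.induction_on with
    | zero => simp
    | add u v hu hv => simp only [map_add, hu, hv]
    | tmul x u =>
      simp only [LinearMap.rTensor_tmul, LinearMap.lTensor_tmul, LinearMap.mul'_apply,
        TensorProduct.comm_tmul, Sinv_mul Sinv hS1 hS2, hS1]
  have h := main (Coalgebra.comul (R := k) a)
  rw [HopfAlgebra.mul_antipode_rTensor_comul_apply] at h
  rw [← h, Algebra.algebraMap_eq_smul_one, map_smul, Sinv_one Sinv hS1]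

include hS1 hS2 in
lemma phi_right (B B' : Subalgebra k U) (hB' : IsRightCoidealSubalgebra k B')
    (φ : U →ₗ[k] k) (hφ : IsZonalSpherical k B B' φ)
    (b' : U) (hb' : b' ∈ B') (y : U) :
    φ (y * Sinv b') = Coalgebra.counit (R := k) b' * φ y := by
  obtain ⟨t, ht⟩ := hB' b' hb'
  have main : ∀ t : B'.toSubmodule ⊗[k] U,
      φ (y * Sinv ((TensorProduct.lid k U)
            ((Coalgebra.counit (R := k) (A := U)).rTensor U
              (LinearMap.rTensor U B'.toSubmodule.subtype t))))
        = φ (y * LinearMap.mul' k U ((TensorProduct.comm k U U)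
            (Sinv.lTensor U (LinearMap.rTensor U B'.toSubmodule.subtype t)))) := by
    intro t
    induction t using TensorProduct.induction_on with
    | zero => simp
    | add u v hu hv => simp only [map_add, mul_add, hu, hv]
    | tmul c u =>
      have hz := hφ (1 : B) (y * Sinv u) ⟨(c : U), c.2⟩
      rw [OneMemClass.coe_one, one_mul, Bialgebra.counit_one, one_mul] at hz
      simp only [LinearMap.rTensor_tmul, LinearMap.lTensor_tmul, TensorProduct.lid_tmul,
        Submodule.coe_subtype, map_smul, mul_smul_comm, TensorProduct.comm_tmul,
        LinearMap.mul'_apply]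
      rw [← mul_assoc, hz, smul_eq_mul]
      ring_nf
  have h1 := main t
  rw [ht, Coalgebra.rTensor_counit_comul, sinv_identity Sinv hS1 hS2] at h1
  simp only [TensorProduct.lid_tmul, one_smul] at h1
  rw [h1, ← Algebra.commutes, ← Algebra.smul_def, map_smul, smul_eq_mul]

end ZSAux3

/-- If `φ` is a zonal spherical function for `(B, B')` and the antipode
`S` is bijective (with inverse `Sinv`), then `φ ∘ S` is a zonal spherical function for
`(S⁻²(B'), B)`; explicitly, `φ(S(S⁻²(b')·x·b)) = ε(b')·φ(S(x))·ε(b)` for all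
`b ∈ B`, `b' ∈ B'`, `x ∈ U`. -/
theorem zonalSpherical_comp_antipode
    (k U : Type*) [Field k] [Ring U] [HopfAlgebra k U]
    (B B' : Subalgebra k U)
    (hB : IsRightCoidealSubalgebra k B) (hB' : IsRightCoidealSubalgebra k B')
    (Sinv : U →ₗ[k] U)
    (hS1 : ∀ x : U, Sinv (HopfAlgebra.antipode (R := k) x) = x)
    (hS2 : ∀ x : U, HopfAlgebra.antipode (R := k) (Sinv x) = x)
    (φ : U →ₗ[k] k) (hφ : IsZonalSpherical k B B' φ) :
    ∀ (b : B) (b' : B') (x : U),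
      φ (HopfAlgebra.antipode (R := k) (Sinv (Sinv (b' : U)) * x * (b : U))) =
        Coalgebra.counit (R := k) (b' : U) *
          φ (HopfAlgebra.antipode (R := k) x) * Coalgebra.counit (R := k) (b : U) := by
  intro b b' x
  rw [ZSAux2.antipode_mul_antidistrib, ZSAux2.antipode_mul_antidistrib, hS2,
    phi_left B B' hB φ hφ (b : U) b.2,
    phi_right Sinv hS1 hS2 B B' hB' φ hφ (b' : U) b'.2]
  ring
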